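/- arXiv:2403.07349 — 4 statements merged into one kernel-verified Lean document; each statement's English description precedes it below -/
import Mathlib

section
/- The sequence A_n = Σ_{k=0}^n C(n,k)^2 C(n+k,k)^2 satisfies the Apéry recurrence n^3 u_{n-1} - (2n+1)(17n^2+17n+5) u_n + (n+1)^3 u_{n+1} = 0 for all n ≥ 1, with A_0 = 1 and A_1 = 5. -/
/-- The Apéry sequence for ζ(3): `A n = Σ_{k=0}^n C(n,k)^2 C(n+k,k)^2`. -/
def aperyZeta3 (n : ℕ) : ℤ :=
  ∑ k ∈ Finset.range (n + 1), (n.choose k : ℤ) ^ 2 * ((n + k).choose k : ℤ) ^ 2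

/-- Summand of the Apéry sum. -/
def AF (n k : ℕ) : ℤ := ((n.choose k : ℤ))^2 * (((n + k).choose k : ℤ))^2

/-- Zeilberger certificate polynomial. -/
def AP (n k : ℤ) : ℤ := 4*(2*n+1)*(2*k^2 - 3*k - 4*n^2 - 4*n)

/-- Telescoping partial sum (shifted certificate term). -/
def AG (n k : ℕ) : ℤ := AP (n : ℤ) ((k : ℤ)+1) * AF n k

lemma L1 (N k : ℕ) : (N - k) * ((N+1).choose (k+1)) = (N+1) * (N.choose (k+1)) := by
  rcases le_or_gt k N with h | h
  · have h1 : N.choose (k+1) * (k+1) = N.choose k * (N-k) := Nat.choose_succ_right_eq N k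
    have h2 : (N+1).choose (k+1) = N.choose k + N.choose (k+1) := Nat.choose_succ_succ N k
    have h3 : k + 1 + (N-k) = N+1 := by omega
    calc (N-k) * ((N+1).choose (k+1))
        = N.choose k * (N-k) + (N-k) * N.choose (k+1) := by rw [h2]; ring
      _ = N.choose (k+1) * (k+1) + (N-k) * N.choose (k+1) := by rw [h1]
      _ = (k+1+(N-k)) * N.choose (k+1) := by ring
      _ = (N+1) * N.choose (k+1) := by rw [h3]
  · have h4 : N < k + 1 := by omega
    simp [Nat.choose_eq_zero_of_lt h4, Nat.sub_eq_zero_of_le (le_of_lt h)]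

lemma key_core (k m : ℕ) (x1 x2 x3 x4 x5 x6 x7 x8 : ℤ)
    (r1 : ((m:ℤ)+1)*x1 = ((k:ℤ)+m+2)*x3)
    (r2 : ((k:ℤ)+m+2)*x2 = (2*(k:ℤ)+m+3)*x4)
    (r3 : (m:ℤ)*x3 = ((k:ℤ)+m+1)*x5)
    (r4 : ((k:ℤ)+m+1)*x4 = (2*(k:ℤ)+m+2)*x6)
    (r5 : ((k:ℤ)+1)*x3 = ((m:ℤ)+1)*x7)
    (r6 : ((k:ℤ)+1)*x4 = (2*(k:ℤ)+m+2)*x8) :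
    ((k:ℤ)+m+2)^3*(x1^2*x2^2)
      - (2*((k:ℤ)+m+1)+1)*(17*((k:ℤ)+m+1)^2+17*((k:ℤ)+m+1)+5)*(x3^2*x4^2)
      + ((k:ℤ)+m+1)^3*(x5^2*x6^2)
    = 4*(2*((k:ℤ)+m+1)+1)*(2*((k:ℤ)+2)^2-3*((k:ℤ)+2)-4*((k:ℤ)+m+1)^2-4*((k:ℤ)+m+1))*(x3^2*x4^2)
      - 4*(2*((k:ℤ)+m+1)+1)*(2*((k:ℤ)+1)^2-3*((k:ℤ)+1)-4*((k:ℤ)+m+1)^2-4*((k:ℤ)+m+1))*(x7^2*x8^2) := by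
  have hD : (((m:ℤ)+1)^2*((k:ℤ)+m+2)^2*((k:ℤ)+m+1)^2*(2*(k:ℤ)+m+2)^2*((k:ℤ)+1)^4 : ℤ) ≠ 0 := by
    positivity
  apply mul_left_cancel₀ hD
  have s1 : (((m:ℤ)+1)*x1)^2 = (((k:ℤ)+m+2)*x3)^2 := by rw [r1]
  have s2 : (((k:ℤ)+m+2)*x2)^2 = ((2*(k:ℤ)+m+3)*x4)^2 := by rw [r2]
  have s3 : ((m:ℤ)*x3)^2 = (((k:ℤ)+m+1)*x5)^2 := by rw [r3]
  have s4 : (((k:ℤ)+m+1)*x4)^2 = ((2*(k:ℤ)+m+2)*x6)^2 := by rw [r4]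
  have s5 : (((k:ℤ)+1)*x3)^2 = (((m:ℤ)+1)*x7)^2 := by rw [r5]
  have s6 : (((k:ℤ)+1)*x4)^2 = ((2*(k:ℤ)+m+2)*x8)^2 := by rw [r6]
  linear_combination
      (((k:ℤ)+m+2)^3*((k:ℤ)+m+1)^2*(2*(k:ℤ)+m+2)^2*((k:ℤ)+1)^4) *
        ((((k:ℤ)+m+2)*x2)^2 * s1 + (((k:ℤ)+m+2)*x3)^2 * s2)
    - (((k:ℤ)+m+1)^3*((m:ℤ)+1)^2*((k:ℤ)+m+2)^2*((k:ℤ)+1)^4) *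
        (((2*(k:ℤ)+m+2)*x6)^2 * s3 + ((m:ℤ)*x3)^2 * s4)
    - (4*(2*((k:ℤ)+m+1)+1)*(2*((k:ℤ)+1)^2-3*((k:ℤ)+1)-4*((k:ℤ)+m+1)^2-4*((k:ℤ)+m+1))
        *((k:ℤ)+m+2)^2*((k:ℤ)+m+1)^2*((k:ℤ)+1)^4) *
        ((((k:ℤ)+1)*x4)^2 * s5 + (((m:ℤ)+1)*x7)^2 * s6)

lemma key_main (k m : ℕ) :
    ((k:ℤ)+m+2)^3 * AF (k+m+2) (k+1)
      - (2*((k:ℤ)+m+1)+1)*(17*((k:ℤ)+m+1)^2+17*((k:ℤ)+m+1)+5) * AF (k+m+1) (k+1)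
      + ((k:ℤ)+m+1)^3 * AF (k+m) (k+1)
    = AG (k+m+1) (k+1) - AG (k+m+1) k := by
  have r1 : ((m:ℤ)+1) * ((k+m+2).choose (k+1) : ℤ) = ((k:ℤ)+m+2) * ((k+m+1).choose (k+1) : ℤ) := by
    have h := L1 (k+m+1) k
    rw [show (k+m+1)-k = m+1 from by omega, show k+m+1+1 = k+m+2 from by omega] at h
    zify at h; linear_combination h
  have r2 : ((k:ℤ)+m+2) * ((k+m+2+(k+1)).choose (k+1) : ℤ)
      = (2*(k:ℤ)+m+3) * ((k+m+1+(k+1)).choose (k+1) : ℤ) := by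
    have h := L1 (k+m+1+(k+1)) k
    rw [show (k+m+1+(k+1))-k = k+m+2 from by omega,
        show k+m+1+(k+1)+1 = k+m+2+(k+1) from by omega] at h
    zify at h; linear_combination h
  have r3 : ((m:ℤ)) * ((k+m+1).choose (k+1) : ℤ) = ((k:ℤ)+m+1) * ((k+m).choose (k+1) : ℤ) := by
    have h := L1 (k+m) k
    rw [show (k+m)-k = m from by omega] at h
    zify at h; linear_combination h
  have r4 : ((k:ℤ)+m+1) * ((k+m+1+(k+1)).choose (k+1) : ℤ)
      = (2*(k:ℤ)+m+2) * ((k+m+(k+1)).choose (k+1) : ℤ) := by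
    have h := L1 (k+m+(k+1)) k
    rw [show (k+m+(k+1))-k = k+m+1 from by omega,
        show k+m+(k+1)+1 = k+m+1+(k+1) from by omega] at h
    zify at h; linear_combination h
  have r5 : ((k:ℤ)+1) * ((k+m+1).choose (k+1) : ℤ) = ((m:ℤ)+1) * ((k+m+1).choose k : ℤ) := by
    have h := Nat.choose_succ_right_eq (k+m+1) k
    rw [show (k+m+1)-k = m+1 from by omega] at h
    zify at h; linear_combination h
  have r6 : ((k:ℤ)+1) * ((k+m+1+(k+1)).choose (k+1) : ℤ)
      = (2*(k:ℤ)+m+2) * ((k+m+1+k).choose k : ℤ) := by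
    have h := Nat.add_one_mul_choose_eq (k+m+1+k) k
    rw [show k+m+1+k+1 = k+m+1+(k+1) from by omega] at h
    zify at h; linear_combination -h
  simp only [AF, AG, AP]
  push_cast
  linear_combination key_core k m _ _ _ _ _ _ _ _ r1 r2 r3 r4 r5 r6

lemma key_all (n j : ℕ) (hn : 1 ≤ n) :
    ((n:ℤ)+1)^3 * AF (n+1) (j+1)
      - (2*(n:ℤ)+1)*(17*(n:ℤ)^2+17*(n:ℤ)+5) * AF n (j+1)
      + (n:ℤ)^3 * AF (n-1) (j+1)
    = AG n (j+1) - AG n j := by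
  rcases lt_trichotomy j n with h | rfl | h
  · -- j + 1 ≤ n : main case
    obtain ⟨m, rfl⟩ : ∃ m, n = j+m+1 := ⟨n-j-1, by omega⟩
    rw [show j+m+1-1 = j+m from by omega, show j+m+1+1 = j+m+2 from by omega]
    push_cast
    linear_combination key_main j m
  · -- boundary case j = n
    have z1 : j.choose (j+1) = 0 := Nat.choose_eq_zero_of_lt (by omega)
    have z2 : (j-1).choose (j+1) = 0 := Nat.choose_eq_zero_of_lt (by omega)
    have h3 : (2*j+1).choose j = (2*j+1).choose (j+1) := by
      have h := Nat.choose_symm (show j+1 ≤ 2*j+1 by omega)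
      rw [show 2*j+1-(j+1) = j from by omega] at h
      exact h
    have h1 := Nat.add_one_mul_choose_eq (2*j+1) j
    have h2 := Nat.add_one_mul_choose_eq (2*j) j
    rw [show 2*j+1+1 = j+1+(j+1) from by omega] at h1
    rw [show 2*j+1 = j+j+1 from by omega] at h1 h3
    rw [show 2*j = j+j from by omega] at h2
    have hb : ((j:ℤ)+1)^2 * (((j+1+(j+1)).choose (j+1) : ℤ))
        = ((2*(j:ℤ)+2)*(2*(j:ℤ)+1)) * (((j+j).choose j : ℤ)) := by
      zify at h1 h2 h3
      linear_combination (-((j:ℤ)+1))*h1 - (2*(j:ℤ)+2)*h2 + ((2*(j:ℤ)+2)*((j:ℤ)+1))*h3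
    have sq : (((j:ℤ)+1)^2 * (((j+1+(j+1)).choose (j+1) : ℤ)))^2
        = (((2*(j:ℤ)+2)*(2*(j:ℤ)+1)) * (((j+j).choose j : ℤ)))^2 := by rw [hb]
    have hD : (((j:ℤ)+1)^4 : ℤ) ≠ 0 := by positivity
    simp only [AF, AG, AP, z1, z2, Nat.choose_self]
    push_cast
    apply mul_left_cancel₀ hD
    linear_combination ((j:ℤ)+1)^3 * sq
  · -- degenerate case n < j
    have z1 : (n+1).choose (j+1) = 0 := Nat.choose_eq_zero_of_lt (by omega)
    have z2 : n.choose (j+1) = 0 := Nat.choose_eq_zero_of_lt (by omega)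
    have z3 : (n-1).choose (j+1) = 0 := Nat.choose_eq_zero_of_lt (by omega)
    have z4 : n.choose j = 0 := Nat.choose_eq_zero_of_lt (by omega)
    simp [AF, AG, z1, z2, z3, z4]

lemma sum_eq (n : ℕ) (hn : 1 ≤ n) (M : ℕ) :
    ∑ j ∈ Finset.range (M+1),
        (((n:ℤ)+1)^3 * AF (n+1) j
          - (2*(n:ℤ)+1)*(17*(n:ℤ)^2+17*(n:ℤ)+5) * AF n j
          + (n:ℤ)^3 * AF (n-1) j)
      = AG n M := by
  induction M with
  | zero => simp [AF, AG, AP]; ring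
  | succ M ih =>
      rw [Finset.sum_range_succ, ih]
      linear_combination key_all n M hn

/-- The sequence `A_n = Σ_{k=0}^n C(n,k)^2 C(n+k,k)^2` satisfies the Apéry recurrence
`n^3 u_{n-1} - (2n+1)(17n^2+17n+5) u_n + (n+1)^3 u_{n+1} = 0` for all `n ≥ 1`,
with `A_0 = 1` and `A_1 = 5`. -/
theorem apery_zeta3_recurrence :
    aperyZeta3 0 = 1 ∧ aperyZeta3 1 = 5 ∧
    ∀ n : ℕ, 1 ≤ n →
      (n : ℤ) ^ 3 * aperyZeta3 (n - 1)
        - (2 * (n : ℤ) + 1) * (17 * (n : ℤ) ^ 2 + 17 * (n : ℤ) + 5) * aperyZeta3 n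
        + ((n : ℤ) + 1) ^ 3 * aperyZeta3 (n + 1) = 0 := by
  refine ⟨by norm_num [aperyZeta3], by norm_num [aperyZeta3, Finset.sum_range_succ], ?_⟩
  intro n hn
  obtain ⟨p, rfl⟩ : ∃ p, n = p+1 := ⟨n-1, by omega⟩
  have hs := sum_eq (p+1) (by omega) (p+2)
  simp only [Nat.add_sub_cancel] at hs ⊢
  have hc : (p+1).choose (p+2) = 0 := Nat.choose_eq_zero_of_lt (by omega)
  have hAG : AG (p+1) (p+2) = 0 := by simp [AG, AF, hc]
  have z1 : AF (p+1) (p+2) = 0 := by simp [AF, hc]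
  have z2 : AF p (p+1) = 0 := by
    simp [AF, Nat.choose_eq_zero_of_lt (show p < p+1 by omega)]
  have z3 : AF p (p+2) = 0 := by
    simp [AF, Nat.choose_eq_zero_of_lt (show p < p+2 by omega)]
  have e2 : ∑ j ∈ Finset.range (p+2+1), AF (p+1+1) j = aperyZeta3 (p+2) := rfl
  have e1 : ∑ j ∈ Finset.range (p+2+1), AF (p+1) j = aperyZeta3 (p+1) := by
    rw [Finset.sum_range_succ, z1, add_zero]; rfl
  have e0 : ∑ j ∈ Finset.range (p+2+1), AF p j = aperyZeta3 p := by
    rw [Finset.sum_range_succ, Finset.sum_range_succ, z3, z2, add_zero, add_zero]; rfl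
  rw [hAG, Finset.sum_add_distrib, Finset.sum_sub_distrib, ← Finset.mul_sum, ← Finset.mul_sum,
    ← Finset.mul_sum, e2, e1, e0] at hs
  push_cast at hs ⊢
  linear_combination hs
end

section
/- The formal power series ω(t) = Σ_{n≥0} A_n t^n, where A_n = Σ_{k=0}^n C(n,k)^2 C(n+k,k)^2, is annihilated by the differential operator L_3 = θ^3 - t(2θ+1)(17θ^2+17θ+5) + t^2 (θ+1)^3, where θ = t d/dt. -/
open PowerSeries

/-- The logarithmic derivative `θ = t d/dt` acting on formal power series:
`θ(Σ c_n t^n) = Σ n c_n t^n`. -/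
noncomputable def theta (f : PowerSeries ℚ) : PowerSeries ℚ :=
  PowerSeries.mk fun n => (n : ℚ) * PowerSeries.coeff n f

/-- The Apéry numbers for ζ(3): `A n = Σ_{k=0}^n C(n,k)^2 C(n+k,k)^2` as rationals. -/
def aperyA (n : ℕ) : ℚ :=
  ∑ k ∈ Finset.range (n + 1), (n.choose k : ℚ) ^ 2 * ((n + k).choose k : ℚ) ^ 2

/-- The operator `17θ^2 + 17θ + 5`. -/
noncomputable def opQ3 (f : PowerSeries ℚ) : PowerSeries ℚ :=
  (17 : ℚ) • theta (theta f) + (17 : ℚ) • theta f + (5 : ℚ) • f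

/-- The operator `θ + 1`. -/
noncomputable def opT1 (f : PowerSeries ℚ) : PowerSeries ℚ := theta f + f

/-- Summand of the Apéry numbers. -/
private def Fq (n k : ℕ) : ℚ := ((n.choose k : ℕ) : ℚ)^2 * (((n+k).choose k : ℕ) : ℚ)^2

/-- Zeilberger certificate for Apéry's recurrence. -/
private def Bq (n k : ℕ) : ℚ :=
  4*(2*(n:ℚ)+1)*((k:ℚ)*(2*(k:ℚ)+1)-(2*(n:ℚ)+1)^2) * Fq n k

private def gq (n : ℕ) : ℕ → ℚ
  | 0 => 0
  | (j+1) => Bq (n+1) j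

set_option maxHeartbeats 4000000 in
private lemma perk (n k : ℕ) :
    ((n:ℚ)+2)^3 * Fq (n+2) k
      - (34*((n:ℚ)+1)^3+51*((n:ℚ)+1)^2+27*((n:ℚ)+1)+5) * Fq (n+1) k
      + ((n:ℚ)+1)^3 * Fq n k
    = gq n (k+1) - gq n k := by
  rcases k with _ | j
  · simp [gq, Bq, Fq]
    ring
  · simp only [gq]
    by_cases hcase : j + 1 ≤ n
    · obtain ⟨e, rfl⟩ : ∃ e, n = j + 1 + e := ⟨n - (j+1), by omega⟩
      push_cast
      have hJ : ((j.factorial : ℕ) : ℚ) ≠ 0 := by exact_mod_cast j.factorial_ne_zero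
      have hE : ((e.factorial : ℕ) : ℚ) ≠ 0 := by exact_mod_cast e.factorial_ne_zero
      have hP : (((j+e).factorial : ℕ) : ℚ) ≠ 0 := by exact_mod_cast (j+e).factorial_ne_zero
      have hQ : (((2*j+e+1).factorial : ℕ) : ℚ) ≠ 0 := by
        exact_mod_cast (2*j+e+1).factorial_ne_zero
      -- factorial expansions
      have fjp1 : (((j+1).factorial : ℕ) : ℚ) = ((j:ℚ)+1) * (j.factorial : ℚ) := by
        push_cast [Nat.factorial_succ]; ring
      have fep1 : (((e+1).factorial : ℕ) : ℚ) = ((e:ℚ)+1) * (e.factorial : ℚ) := by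
        push_cast [Nat.factorial_succ]; ring
      have fep2 : (((e+2).factorial : ℕ) : ℚ) = ((e:ℚ)+2) * (((e:ℚ)+1) * (e.factorial : ℚ)) := by
        push_cast [Nat.factorial_succ]; ring
      have fp1 : (((j+e+1).factorial : ℕ) : ℚ) = ((j:ℚ)+e+1) * ((j+e).factorial : ℚ) := by
        push_cast [Nat.factorial_succ]; ring
      have fp2 : (((j+e+2).factorial : ℕ) : ℚ)
          = ((j:ℚ)+e+2) * (((j:ℚ)+e+1) * ((j+e).factorial : ℚ)) := by
        push_cast [Nat.factorial_succ]; ring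
      have fp3 : (((j+e+3).factorial : ℕ) : ℚ)
          = ((j:ℚ)+e+3) * (((j:ℚ)+e+2) * (((j:ℚ)+e+1) * ((j+e).factorial : ℚ))) := by
        push_cast [Nat.factorial_succ]; ring
      have fq2 : (((2*j+e+2).factorial : ℕ) : ℚ)
          = (2*(j:ℚ)+e+2) * ((2*j+e+1).factorial : ℚ) := by
        rw [(by omega : 2*j+e+2 = (2*j+e+1)+1), Nat.factorial_succ]; push_cast; ring
      have fq3 : (((2*j+e+3).factorial : ℕ) : ℚ)
          = (2*(j:ℚ)+e+3) * ((2*(j:ℚ)+e+2) * ((2*j+e+1).factorial : ℚ)) := by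
        rw [(by omega : 2*j+e+3 = (2*j+e+2)+1), Nat.factorial_succ]; push_cast [fq2]; ring
      have fq4 : (((2*j+e+4).factorial : ℕ) : ℚ)
          = (2*(j:ℚ)+e+4) * ((2*(j:ℚ)+e+3) * ((2*(j:ℚ)+e+2) * ((2*j+e+1).factorial : ℚ))) := by
        rw [(by omega : 2*j+e+4 = (2*j+e+3)+1), Nat.factorial_succ]; push_cast [fq3]; ring
      -- choose conversions
      have h1 : (((j+1+e+2).choose (j+1) : ℕ) : ℚ)
          = (((j+e+3).factorial : ℕ) : ℚ)
            / ((((j+1).factorial : ℕ) : ℚ) * (((e+2).factorial : ℕ) : ℚ)) := by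
        rw [(by omega : j+1+e+2 = (j+1)+(e+2)), Nat.cast_add_choose,
            (by omega : (j+1)+(e+2) = j+e+3)]
      have h2 : (((j+1+e+1).choose (j+1) : ℕ) : ℚ)
          = (((j+e+2).factorial : ℕ) : ℚ)
            / ((((j+1).factorial : ℕ) : ℚ) * (((e+1).factorial : ℕ) : ℚ)) := by
        rw [(by omega : j+1+e+1 = (j+1)+(e+1)), Nat.cast_add_choose,
            (by omega : (j+1)+(e+1) = j+e+2)]
      have h3 : (((j+1+e).choose (j+1) : ℕ) : ℚ)
          = (((j+e+1).factorial : ℕ) : ℚ)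
            / ((((j+1).factorial : ℕ) : ℚ) * ((e.factorial : ℕ) : ℚ)) := by
        rw [(by omega : j+1+e = (j+1)+e), Nat.cast_add_choose,
            (by omega : (j+1)+e = j+e+1)]
      have h4 : ((((j+1+e+2)+(j+1)).choose (j+1) : ℕ) : ℚ)
          = (((2*j+e+4).factorial : ℕ) : ℚ)
            / ((((j+1).factorial : ℕ) : ℚ) * (((j+e+3).factorial : ℕ) : ℚ)) := by
        rw [(by omega : (j+1+e+2)+(j+1) = (j+1)+(j+e+3)), Nat.cast_add_choose,
            (by omega : (j+1)+(j+e+3) = 2*j+e+4)]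
      have h5 : ((((j+1+e+1)+(j+1)).choose (j+1) : ℕ) : ℚ)
          = (((2*j+e+3).factorial : ℕ) : ℚ)
            / ((((j+1).factorial : ℕ) : ℚ) * (((j+e+2).factorial : ℕ) : ℚ)) := by
        rw [(by omega : (j+1+e+1)+(j+1) = (j+1)+(j+e+2)), Nat.cast_add_choose,
            (by omega : (j+1)+(j+e+2) = 2*j+e+3)]
      have h6 : ((((j+1+e)+(j+1)).choose (j+1) : ℕ) : ℚ)
          = (((2*j+e+2).factorial : ℕ) : ℚ)
            / ((((j+1).factorial : ℕ) : ℚ) * (((j+e+1).factorial : ℕ) : ℚ)) := by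
        rw [(by omega : (j+1+e)+(j+1) = (j+1)+(j+e+1)), Nat.cast_add_choose,
            (by omega : (j+1)+(j+e+1) = 2*j+e+2)]
      have h7 : (((j+1+e+1).choose j : ℕ) : ℚ)
          = (((j+e+2).factorial : ℕ) : ℚ)
            / (((j.factorial : ℕ) : ℚ) * (((e+2).factorial : ℕ) : ℚ)) := by
        rw [(by omega : j+1+e+1 = j+(e+2)), Nat.cast_add_choose,
            (by omega : j+(e+2) = j+e+2)]
      have h8 : ((((j+1+e+1)+j).choose j : ℕ) : ℚ)
          = (((2*j+e+2).factorial : ℕ) : ℚ)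
            / (((j.factorial : ℕ) : ℚ) * (((j+e+2).factorial : ℕ) : ℚ)) := by
        rw [(by omega : (j+1+e+1)+j = j+(j+e+2)), Nat.cast_add_choose,
            (by omega : j+(j+e+2) = 2*j+e+2)]
      have hj1 : ((j:ℚ)+1) ≠ 0 := by positivity
      have he1 : ((e:ℚ)+1) ≠ 0 := by positivity
      have he2 : ((e:ℚ)+2) ≠ 0 := by positivity
      set D : ℚ := ((((j:ℚ)+1) * (j.factorial : ℚ))^4
          * (((e:ℚ)+2) * (((e:ℚ)+1) * (e.factorial : ℚ)))^2) with hDdef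
      have hD : D ≠ 0 := by
        rw [hDdef]; positivity
      set Qb : ℚ := (((2*j+e+1).factorial : ℕ) : ℚ) with hQdef2
      have F1 : Fq (j+1+e+2) (j+1) * D
          = ((2*(j:ℚ)+e+4)*(2*(j:ℚ)+e+3)*(2*(j:ℚ)+e+2))^2 * Qb^2 := by
        simp only [Fq, h1, h4, fp3, fjp1, fep2, fq4, hDdef]
        field_simp
      have F2 : Fq (j+1+e+1) (j+1) * D
          = ((2*(j:ℚ)+e+3)*(2*(j:ℚ)+e+2)*((e:ℚ)+2))^2 * Qb^2 := by
        simp only [Fq, h2, h5, fp2, fjp1, fep1, fq3, hDdef]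
        field_simp
      have F3 : Fq (j+1+e) (j+1) * D
          = ((2*(j:ℚ)+e+2)*((e:ℚ)+2)*((e:ℚ)+1))^2 * Qb^2 := by
        simp only [Fq, h3, h6, fp1, fjp1, fq2, hDdef]
        field_simp
      have F4 : Fq (j+1+e+1) j * D = (((j:ℚ)+1)^2)^2 * ((2*(j:ℚ)+e+2))^2 * Qb^2 := by
        simp only [Fq, h7, h8, fp2, fep2, fq2, hDdef]
        field_simp
      refine mul_right_cancel₀ hD ?_
      simp only [Bq]
      push_cast
      linear_combination ((j:ℚ)+1+e+2)^3 * F1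
        + (-(34*((j:ℚ)+1+e+1)^3+51*((j:ℚ)+1+e+1)^2+27*((j:ℚ)+1+e+1)+5)
            - 4*(2*((j:ℚ)+1+e+1)+1)*(((j:ℚ)+1)*(2*((j:ℚ)+1)+1)-(2*((j:ℚ)+1+e+1)+1)^2)) * F2
        + ((j:ℚ)+1+e+1)^3 * F3
        + (4*(2*((j:ℚ)+1+e+1)+1)*((j:ℚ)*(2*(j:ℚ)+1)-(2*((j:ℚ)+1+e+1)+1)^2)) * F4
    · by_cases hc2 : j = n
      · subst hc2
        have hN : ((j.factorial : ℕ) : ℚ) ≠ 0 := by exact_mod_cast j.factorial_ne_zero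
        have hR : (((2*j+1).factorial : ℕ) : ℚ) ≠ 0 := by
          exact_mod_cast (2*j+1).factorial_ne_zero
        have fn1 : (((j+1).factorial : ℕ) : ℚ) = ((j:ℚ)+1) * (j.factorial : ℚ) := by
          push_cast [Nat.factorial_succ]; ring
        have fn2 : (((j+2).factorial : ℕ) : ℚ)
            = ((j:ℚ)+2) * (((j:ℚ)+1) * (j.factorial : ℚ)) := by
          push_cast [Nat.factorial_succ]; ring
        have fr2 : (((2*j+2).factorial : ℕ) : ℚ) = (2*(j:ℚ)+2) * ((2*j+1).factorial : ℚ) := by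
          rw [(by omega : 2*j+2 = (2*j+1)+1), Nat.factorial_succ]; push_cast; ring
        have fr3 : (((2*j+3).factorial : ℕ) : ℚ)
            = (2*(j:ℚ)+3) * ((2*(j:ℚ)+2) * ((2*j+1).factorial : ℚ)) := by
          rw [(by omega : 2*j+3 = (2*j+2)+1), Nat.factorial_succ]; push_cast [fr2]; ring
        have z0 : j.choose (j+1) = 0 := Nat.choose_eq_zero_of_lt (by omega)
        have g1 : (((j+2).choose (j+1) : ℕ) : ℚ) = ((j:ℚ)+2) := by
          rw [(by omega : j+2 = (j+1)+1), Nat.choose_succ_self_right]; push_cast; ring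
        have g1' : (((j+1).choose j : ℕ) : ℚ) = ((j:ℚ)+1) := by
          rw [Nat.choose_succ_self_right]; push_cast; ring
        have g2 : ((((j+2)+(j+1)).choose (j+1) : ℕ) : ℚ)
            = (((2*j+3).factorial : ℕ) : ℚ)
              / ((((j+1).factorial : ℕ) : ℚ) * (((j+2).factorial : ℕ) : ℚ)) := by
          rw [(by omega : (j+2)+(j+1) = (j+1)+(j+2)), Nat.cast_add_choose,
              (by omega : (j+1)+(j+2) = 2*j+3)]
        have g3 : ((((j+1)+(j+1)).choose (j+1) : ℕ) : ℚ)
            = (((2*j+2).factorial : ℕ) : ℚ)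
              / ((((j+1).factorial : ℕ) : ℚ) * (((j+1).factorial : ℕ) : ℚ)) := by
          rw [Nat.cast_add_choose, (by omega : (j+1)+(j+1) = 2*j+2)]
        have g4 : ((((j+1)+j).choose j : ℕ) : ℚ)
            = (((2*j+1).factorial : ℕ) : ℚ)
              / (((j.factorial : ℕ) : ℚ) * (((j+1).factorial : ℕ) : ℚ)) := by
          rw [(by omega : (j+1)+j = j+(j+1)), Nat.cast_add_choose,
              (by omega : j+(j+1) = 2*j+1)]
        simp only [Fq, Bq, Nat.choose_self, z0, g1, g1', g2, g3, g4, fn1, fn2, fr2, fr3]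
        push_cast
        field_simp
        ring
      · by_cases hc3 : j = n + 1
        · subst hc3
          have hN : (((n+1).factorial : ℕ) : ℚ) ≠ 0 := by
            exact_mod_cast (n+1).factorial_ne_zero
          have hR : (((2*n+2).factorial : ℕ) : ℚ) ≠ 0 := by
            exact_mod_cast (2*n+2).factorial_ne_zero
          have z1 : (n+1).choose (n+1+1) = 0 := Nat.choose_eq_zero_of_lt (by omega)
          have z2 : n.choose (n+1+1) = 0 := Nat.choose_eq_zero_of_lt (by omega)
          have f1 : (((n+2).factorial : ℕ) : ℚ) = ((n:ℚ)+2) * ((n+1).factorial : ℚ) := by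
            rw [(by omega : n+2 = (n+1)+1), Nat.factorial_succ]; push_cast; ring
          have f2 : (((2*n+4).factorial : ℕ) : ℚ)
              = (2*(n:ℚ)+4) * ((2*(n:ℚ)+3) * ((2*n+2).factorial : ℚ)) := by
            rw [(by omega : 2*n+4 = (2*n+3)+1), Nat.factorial_succ,
                (by omega : 2*n+3 = (2*n+2)+1), Nat.factorial_succ]; push_cast; ring
          have g5 : ((((n+2)+(n+2)).choose (n+2) : ℕ) : ℚ)
              = (((2*n+4).factorial : ℕ) : ℚ)
                / ((((n+2).factorial : ℕ) : ℚ) * (((n+2).factorial : ℕ) : ℚ)) := by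
            rw [Nat.cast_add_choose, (by omega : (n+2)+(n+2) = 2*n+4)]
          have g3 : ((((n+1)+(n+1)).choose (n+1) : ℕ) : ℚ)
              = (((2*n+2).factorial : ℕ) : ℚ)
                / ((((n+1).factorial : ℕ) : ℚ) * (((n+1).factorial : ℕ) : ℚ)) := by
            rw [Nat.cast_add_choose, (by omega : (n+1)+(n+1) = 2*n+2)]
          have e1 : n + 1 + 1 = n + 2 := by omega
          rw [e1]
          simp only [Fq, Bq, z1, z2, g5, g3, f1, f2, e1, Nat.choose_self]
          push_cast
          field_simp
          ring
        · have z1 : (n+2).choose (j+1) = 0 := Nat.choose_eq_zero_of_lt (by omega)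
          have z2 : (n+1).choose (j+1) = 0 := Nat.choose_eq_zero_of_lt (by omega)
          have z3 : n.choose (j+1) = 0 := Nat.choose_eq_zero_of_lt (by omega)
          have z4 : (n+1).choose j = 0 := Nat.choose_eq_zero_of_lt (by omega)
          simp [Fq, Bq, z1, z2, z3, z4]

private lemma aperyA_eq_sum (m : ℕ) : aperyA m = ∑ k ∈ Finset.range (m+1), Fq m k := by
  simp [aperyA, Fq]

private lemma apery_rec (n : ℕ) :
    ((n:ℚ)+2)^3 * aperyA (n+2)
      - (34*((n:ℚ)+1)^3+51*((n:ℚ)+1)^2+27*((n:ℚ)+1)+5) * aperyA (n+1)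
      + ((n:ℚ)+1)^3 * aperyA n = 0 := by
  have hz1 : Fq (n+1) (n+2) = 0 := by
    simp [Fq, Nat.choose_eq_zero_of_lt (by omega : n+1 < n+2)]
  have hz2 : Fq n (n+2) = 0 := by
    simp [Fq, Nat.choose_eq_zero_of_lt (by omega : n < n+2)]
  have hz3 : Fq n (n+1) = 0 := by
    simp [Fq, Nat.choose_eq_zero_of_lt (by omega : n < n+1)]
  have e2 : aperyA (n+2) = ∑ k ∈ Finset.range (n+3), Fq (n+2) k := aperyA_eq_sum (n+2)
  have e1 : aperyA (n+1) = ∑ k ∈ Finset.range (n+3), Fq (n+1) k := by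
    simp [aperyA_eq_sum, Finset.sum_range_succ, hz1]
  have e0 : aperyA n = ∑ k ∈ Finset.range (n+3), Fq n k := by
    simp [aperyA_eq_sum, Finset.sum_range_succ, hz2, hz3]
  rw [e2, e1, e0, Finset.mul_sum, Finset.mul_sum, Finset.mul_sum,
    ← Finset.sum_sub_distrib, ← Finset.sum_add_distrib]
  have tele : ∑ k ∈ Finset.range (n+3),
      (((n:ℚ)+2)^3 * Fq (n+2) k
        - (34*((n:ℚ)+1)^3+51*((n:ℚ)+1)^2+27*((n:ℚ)+1)+5) * Fq (n+1) k
        + ((n:ℚ)+1)^3 * Fq n k)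
      = ∑ k ∈ Finset.range (n+3), (gq n (k+1) - gq n k) :=
    Finset.sum_congr rfl fun k _ => perk n k
  rw [tele, Finset.sum_range_sub (gq n)]
  have : gq n (n+3) = 0 := by
    simp [gq, Bq, Fq, Nat.choose_eq_zero_of_lt (by omega : n+1 < n+2)]
  rw [this]
  simp [gq]

private lemma coeff_theta (n : ℕ) (f : PowerSeries ℚ) :
    PowerSeries.coeff n (theta f) = (n : ℚ) * PowerSeries.coeff n f := by
  simp [theta]

/-- The formal power series `ω(t) = Σ A_n t^n` with `A_n = Σ_k C(n,k)^2 C(n+k,k)^2`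
is annihilated by `L_3 = θ^3 - t(2θ+1)(17θ^2+17θ+5) + t^2 (θ+1)^3`. -/
theorem apery_zeta3_picard_fuchs :
    theta (theta (theta (PowerSeries.mk fun n => aperyA n)))
      - X * ((2 : ℚ) • theta (opQ3 (PowerSeries.mk fun n => aperyA n))
              + opQ3 (PowerSeries.mk fun n => aperyA n))
      + X ^ 2 * opT1 (opT1 (opT1 (PowerSeries.mk fun n => aperyA n))) = 0 := by
  ext n
  rw [map_add, map_sub, map_zero]
  rw [sq (X : PowerSeries ℚ), mul_assoc]
  rcases n with _ | _ | m
  · simp [coeff_theta, PowerSeries.coeff_zero_eq_constantCoeff, map_mul]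
  · rw [PowerSeries.coeff_succ_X_mul, PowerSeries.coeff_succ_X_mul]
    simp [coeff_theta, opQ3, opT1, theta, PowerSeries.coeff_zero_eq_constantCoeff,
      map_mul, aperyA, Finset.sum_range_succ]
    norm_num
  · rw [PowerSeries.coeff_succ_X_mul, PowerSeries.coeff_succ_X_mul,
      PowerSeries.coeff_succ_X_mul]
    simp only [opQ3, opT1, map_add, map_smul, coeff_theta, PowerSeries.coeff_mk,
      smul_eq_mul]
    push_cast
    linear_combination apery_rec m
end

section
/- The formal power series ω(t) = Σ_{n≥0} a_n t^n, where a_n = Σ_{k=0}^n C(n,k)^2 C(n+k,k), is annihilated by the operator L_2 = θ^2 - t(11θ^2+11θ+3) - t^2 (θ+1)^2, where θ = t d/dt acting on formal power series. -/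
open PowerSeries

/-- The Apéry numbers for ζ(2): `a n = Σ_{k=0}^n C(n,k)^2 C(n+k,k)` as rationals. -/
def aperyA2 (n : ℕ) : ℚ :=
  ∑ k ∈ Finset.range (n + 1), (n.choose k : ℚ) ^ 2 * ((n + k).choose k : ℚ)

/-- summand -/
def F2 (n k : ℕ) : ℚ := (n.choose k : ℚ) ^ 2 * ((n + k).choose k : ℚ)

/-- WZ certificate term -/
noncomputable def certM (m k : ℕ) : ℚ :=
  (k : ℚ) ^ 3 * ((k : ℚ) ^ 2 + (6 * m + 7) * k - ((m : ℚ) + 2) * (11 * m + 15))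
    / (((m : ℚ) + 2) ^ 2 * ((m : ℚ) + 1))
    * ((m + 2).choose k : ℚ) ^ 2 * ((m + k).choose k : ℚ)

lemma rA (n k : ℕ) : ((n : ℚ) + 1 - k) * ((n + 1).choose k : ℚ) = ((n : ℚ) + 1) * (n.choose k : ℚ) := by
  rcases le_or_gt k (n + 1) with h | h
  · have h1 := Nat.choose_mul_succ_eq n k
    have h2 : ((n.choose k * (n + 1) : ℕ) : ℚ) = (((n + 1).choose k * (n + 1 - k) : ℕ) : ℚ) := by
      rw [h1]
    push_cast [Nat.cast_sub h] at h2
    linarith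
  · rw [Nat.choose_eq_zero_of_lt h, Nat.choose_eq_zero_of_lt (by omega)]
    simp

lemma rC (n k : ℕ) : ((k : ℚ) + 1) * (n.choose (k + 1) : ℚ) = ((n : ℚ) - k) * (n.choose k : ℚ) := by
  rcases le_or_gt k n with h | h
  · have h1 := Nat.choose_succ_right_eq n k
    have h2 : ((n.choose (k + 1) * (k + 1) : ℕ) : ℚ) = ((n.choose k * (n - k) : ℕ) : ℚ) := by
      rw [h1]
    push_cast [Nat.cast_sub h] at h2
    linarith
  · rw [Nat.choose_eq_zero_of_lt h, Nat.choose_eq_zero_of_lt (by omega)]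
    simp

lemma rB (n k : ℕ) : ((n : ℚ) + 1 + k) * ((n + k).choose k : ℚ) = ((n : ℚ) + 1) * ((n + 1 + k).choose k : ℚ) := by
  have h1 := Nat.choose_mul_succ_eq (n + k) k
  have e : n + k + 1 - k = n + 1 := by omega
  have e2 : n + k + 1 = n + 1 + k := by omega
  rw [e, e2] at h1
  have h2 : (((n + k).choose k * (n + 1 + k) : ℕ) : ℚ) = (((n + 1 + k).choose k * (n + 1) : ℕ) : ℚ) := by
    rw [h1]
  push_cast at h2
  linarith

set_option maxHeartbeats 2000000 in
lemma key (m k : ℕ) :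
    ((m : ℚ) + 2) ^ 2 * F2 (m + 2) k
      - (11 * ((m : ℚ) + 2) ^ 2 - 11 * ((m : ℚ) + 2) + 3) * F2 (m + 1) k
      - ((m : ℚ) + 1) ^ 2 * F2 m k
    = certM m (k + 1) - certM m k := by
  have d1 : ((m : ℚ) + 2) ≠ 0 := by positivity
  have d2 : ((m : ℚ) + 1) ≠ 0 := by positivity
  have d3 : ((m : ℚ) + 2 + k) ≠ 0 := by positivity
  have d4 : ((m : ℚ) + 1 + k) ≠ 0 := by positivity
  have d5 : ((k : ℚ) + 1) ≠ 0 := by positivity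
  have e1 : ((m + 1).choose k : ℚ) = ((m : ℚ) + 2 - k) / ((m : ℚ) + 2) * ((m + 2).choose k : ℚ) := by
    have h := rA (m + 1) k
    rw [show m + 1 + 1 = m + 2 from by ring] at h
    push_cast at h
    field_simp
    linarith
  have e2 : (m.choose k : ℚ) = ((m : ℚ) + 1 - k) / ((m : ℚ) + 1) * ((m + 1).choose k : ℚ) := by
    have h := rA m k
    field_simp
    linarith
  have e3 : ((m + 1 + k).choose k : ℚ) = ((m : ℚ) + 2) / ((m : ℚ) + 2 + k) * ((m + 2 + k).choose k : ℚ) := by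
    have h := rB (m + 1) k
    rw [show m + 1 + 1 + k = m + 2 + k from by ring] at h
    push_cast at h
    field_simp
    linarith
  have e4 : ((m + k).choose k : ℚ) = ((m : ℚ) + 1) / ((m : ℚ) + 1 + k) * ((m + 1 + k).choose k : ℚ) := by
    have h := rB m k
    push_cast at h
    field_simp
    linarith
  have e5 : ((m + 2).choose (k + 1) : ℚ) = ((m : ℚ) + 2 - k) / ((k : ℚ) + 1) * ((m + 2).choose k : ℚ) := by
    have h := rC (m + 2) k
    push_cast at h
    field_simp
    linarith
  have e6 : ((m + (k + 1)).choose (k + 1) : ℚ)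
      = ((m : ℚ) + 1) / ((k : ℚ) + 1) * ((m + 1 + k).choose k : ℚ) := by
    have h := rC (m + 1 + k) k
    rw [show m + (k + 1) = m + 1 + k from by ring]
    push_cast at h
    field_simp
    linarith
  simp only [F2, certM]
  rw [e5, e6, e2, e1, e4, e3]
  push_cast
  field_simp
  ring

lemma telescope (m : ℕ) :
    ∑ k ∈ Finset.range (m + 3), (certM m (k + 1) - certM m k) = 0 := by
  rw [Finset.sum_range_sub (fun k => certM m k)]
  have h0 : certM m 0 = 0 := by simp [certM]
  have h1 : certM m (m + 3) = 0 := by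
    have : (m + 2).choose (m + 3) = 0 := Nat.choose_eq_zero_of_lt (by omega)
    simp [certM, this]
  rw [h0, h1, sub_zero]

lemma hs2 (m : ℕ) : aperyA2 (m + 2) = ∑ k ∈ Finset.range (m + 3), F2 (m + 2) k := rfl

lemma hs1 (m : ℕ) : aperyA2 (m + 1) = ∑ k ∈ Finset.range (m + 3), F2 (m + 1) k := by
  rw [Finset.sum_range_succ]
  have : F2 (m + 1) (m + 2) = 0 := by
    simp [F2, Nat.choose_eq_zero_of_lt (show m + 1 < m + 2 by omega)]
  rw [this, add_zero]
  rfl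

lemma hs0 (m : ℕ) : aperyA2 m = ∑ k ∈ Finset.range (m + 3), F2 m k := by
  rw [Finset.sum_range_succ, Finset.sum_range_succ]
  have h1 : F2 m (m + 2) = 0 := by
    simp [F2, Nat.choose_eq_zero_of_lt (show m < m + 2 by omega)]
  have h2 : F2 m (m + 1) = 0 := by
    simp [F2, Nat.choose_eq_zero_of_lt (show m < m + 1 by omega)]
  rw [h1, h2, add_zero, add_zero]
  rfl

lemma expand (m : ℕ) :
    ((m : ℚ) + 2) ^ 2 * aperyA2 (m + 2)
      - (11 * ((m : ℚ) + 2) ^ 2 - 11 * ((m : ℚ) + 2) + 3) * aperyA2 (m + 1)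
      - ((m : ℚ) + 1) ^ 2 * aperyA2 m = 0 := by
  rw [hs2, hs1, hs0, Finset.mul_sum, Finset.mul_sum, Finset.mul_sum,
    ← Finset.sum_sub_distrib, ← Finset.sum_sub_distrib]
  rw [Finset.sum_congr rfl (fun k _ => key m k)]
  exact telescope m

/-- The formal power series `ω(t) = Σ a_n t^n` with `a_n = Σ_k C(n,k)^2 C(n+k,k)`
is annihilated by `L_2 = θ^2 - t(11θ^2+11θ+3) - t^2 (θ+1)^2`. -/
theorem apery_zeta2_picard_fuchs :
    theta (theta (PowerSeries.mk fun n => aperyA2 n))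
      - X * ((11 : ℚ) • theta (theta (PowerSeries.mk fun n => aperyA2 n))
              + (11 : ℚ) • theta (PowerSeries.mk fun n => aperyA2 n)
              + (3 : ℚ) • (PowerSeries.mk fun n => aperyA2 n))
      - X ^ 2 * opT1 (opT1 (PowerSeries.mk fun n => aperyA2 n)) = 0 := by
  have hx2 : ∀ φ : ℚ⟦X⟧, (X : ℚ⟦X⟧) ^ 2 * φ = X * (X * φ) := fun φ => by ring
  ext n
  rw [hx2]
  rcases n with _ | n
  · simp [theta, opT1, PowerSeries.coeff_zero_X_mul]
  rcases n with _ | m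
  · simp [PowerSeries.coeff_succ_X_mul, PowerSeries.coeff_zero_X_mul, theta, opT1,
      aperyA2, Finset.sum_range_succ]
    norm_num
  · simp only [map_sub, PowerSeries.coeff_succ_X_mul, PowerSeries.coeff_zero_X_mul,
      map_add, map_smul, smul_eq_mul, theta, opT1, PowerSeries.coeff_mk, map_zero]
    push_cast
    linear_combination _root_.expand m
end

section
/- Suppose q dQ/dq · (1/Q) = 1 + Σ_{k≥1} k^3 N_k q^k/(1-q^k) and Q dq/dQ · (1/q) = 1 + Σ_{k≥1} k^2 Ñ_k Q^k/(1-Q^k) as formal power series, where Q = -q(1 + O(q)). Then the first dual instanton numbers satisfy N_1 = Ñ_1 and N_2 = (1/4)Ñ_1^2 - (1/4)Ñ_1 - (1/2)Ñ_2. -/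
open PowerSeries

/-- The Lambert-type series `1 + Σ_{k≥1} k^w c_k q^k/(1-q^k)`. -/
noncomputable def lambertOne (w : ℕ) (c : ℕ → ℚ) : PowerSeries ℚ :=
  PowerSeries.mk fun j => if j = 0 then 1 else ∑ k ∈ j.divisors, (k : ℚ) ^ w * c k

/-- Composition `G ∘ Q` of formal power series, valid when `Q` has zero constant
term: the coefficient of `q^m` in `Σ_j g_j Q^j` only involves `j ≤ m`. -/
noncomputable def substSeries (G Q : PowerSeries ℚ) : PowerSeries ℚ :=
  PowerSeries.mk fun m =>
    ∑ j ∈ Finset.range (m + 1), PowerSeries.coeff j G * PowerSeries.coeff m (Q ^ j)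

lemma coeff_mul_one' (f g : PowerSeries ℚ) :
    coeff 1 (f*g) = coeff 0 f * coeff 1 g + coeff 1 f * coeff 0 g := by
  rw [PowerSeries.coeff_mul, Finset.Nat.sum_antidiagonal_eq_sum_range_succ_mk]
  simp [Finset.sum_range_succ]

lemma coeff_mul_two' (f g : PowerSeries ℚ) :
    coeff 2 (f*g) = coeff 0 f * coeff 2 g + coeff 1 f * coeff 1 g
      + coeff 2 f * coeff 0 g := by
  rw [PowerSeries.coeff_mul, Finset.Nat.sum_antidiagonal_eq_sum_range_succ_mk]
  simp [Finset.sum_range_succ]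

/-- Suppose `q dQ/dq · (1/Q) = 1 + Σ k^3 N_k q^k/(1-q^k)` and
`Q dq/dQ · (1/q) = 1 + Σ k^2 Ñ_k Q^k/(1-Q^k)` as formal power series, where
`Q = -q(1 + O(q))` (the second equation, composed back with `Q = Q(q)`, states
that `(1 + Σ k^3 N_k q^k/(1-q^k)) · (1 + Σ k^2 Ñ_k Q^k/(1-Q^k))∘Q = 1`). Then
`N_1 = Ñ_1` and `N_2 = (1/4)Ñ_1^2 - (1/4)Ñ_1 - (1/2)Ñ_2`. -/
theorem dual_instanton_relations (N Ntil : ℕ → ℚ) (Q : PowerSeries ℚ)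
    (hQ0 : PowerSeries.constantCoeff Q = 0)
    (hQ1 : PowerSeries.coeff 1 Q = -1)
    (hlog : theta Q = Q * lambertOne 3 N)
    (hdual : lambertOne 3 N * substSeries (lambertOne 2 Ntil) Q = 1) :
    N 1 = Ntil 1 ∧
    N 2 = (1 / 4) * (Ntil 1) ^ 2 - (1 / 4) * Ntil 1 - (1 / 2) * Ntil 2 := by
  have hQ0' : coeff 0 Q = 0 := by rw [PowerSeries.coeff_zero_eq_constantCoeff]; exact hQ0
  set a2 := coeff 2 Q with ha2
  set L := lambertOne 3 N with hL
  set M := lambertOne 2 Ntil with hM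
  set S := substSeries M Q with hS
  have hd1 : Nat.divisors 1 = {1} := by decide
  have hd2 : Nat.divisors 2 = {1, 2} := by decide
  have hL0 : coeff 0 L = 1 := by simp [hL, lambertOne]
  have hL1 : coeff 1 L = N 1 := by simp [hL, lambertOne, hd1]
  have hL2 : coeff 2 L = N 1 + 8 * N 2 := by
    rw [hL]; simp only [lambertOne, coeff_mk]
    rw [if_neg (by norm_num), hd2, Finset.sum_pair (by norm_num : (1:ℕ) ≠ 2)]
    norm_num
  have hM0 : coeff 0 M = 1 := by simp [hM, lambertOne]
  have hM1 : coeff 1 M = Ntil 1 := by simp [hM, lambertOne, hd1]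
  have hM2 : coeff 2 M = Ntil 1 + 4 * Ntil 2 := by
    rw [hM]; simp only [lambertOne, coeff_mk]
    rw [if_neg (by norm_num), hd2, Finset.sum_pair (by norm_num : (1:ℕ) ≠ 2)]
    norm_num
  have hQsq : coeff 2 (Q ^ 2) = 1 := by
    rw [sq, coeff_mul_two', hQ0', hQ1]; ring
  have hS0 : coeff 0 S = 1 := by
    simp [hS, substSeries, hM0]
  have hS1 : coeff 1 S = -Ntil 1 := by
    simp [hS, substSeries, Finset.sum_range_succ, hM0, hM1, hQ1]
  have hS2 : coeff 2 S = Ntil 1 * a2 + (Ntil 1 + 4 * Ntil 2) := by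
    simp only [hS, substSeries, coeff_mk, Finset.sum_range_succ, Finset.sum_range_zero,
      pow_zero, pow_one, hM0, hM1, hM2, hQsq, ← ha2]
    simp
  have e0 := congrArg (coeff 2) hlog
  rw [coeff_mul_two'] at e0
  simp only [theta, coeff_mk, hQ0', hQ1, hL0, hL1, ← ha2, Nat.cast_ofNat, mul_one,
    zero_mul, zero_add, mul_zero, add_zero] at e0
  have e1 := congrArg (coeff 1) hdual
  rw [coeff_mul_one'] at e1
  rw [hL0, hL1, hS0, hS1] at e1
  simp only [PowerSeries.coeff_one, if_neg (one_ne_zero)] at e1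
  have e2 := congrArg (coeff 2) hdual
  rw [coeff_mul_two'] at e2
  rw [hL0, hL1, hL2, hS0, hS1, hS2] at e2
  simp only [PowerSeries.coeff_one, if_neg (two_ne_zero)] at e2
  have hN1 : N 1 = Ntil 1 := by linarith
  have ha : a2 = -N 1 := by linarith
  refine ⟨hN1, ?_⟩
  rw [ha, hN1] at e2
  nlinarith [e2]
end
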